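/- arXiv:1510.07158 — 2 statements merged into one kernel-verified Lean document; each statement's English description precedes it below -/
import Mathlib

section
/- Let J be a nonempty finite index set and let c_j ∈ (0,1) for each j ∈ J. If ∑_{j∈J} c_j > 1, then the equation x = ∏_{j∈J} ((1 - c_j) + c_j x) has exactly one solution x in the open interval (0,1). -/
/-!
Write `f x = ∏ j ∈ J, ((1 - c j) + c j * x)`. Then `f 1 = 1`, `f 0 > 0` and `f' 1 = ∑ j ∈ J, c j > 1`,
so `f x < x` just below `1` and the intermediate value theorem gives a fixed point in `(0, 1)`.
Since `∑ j ∈ J, c j > 1` forces at least two factors, each with positive slope, `f'` is strictly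
increasing on `[0, ∞)` and `f` is strictly convex there. Three fixed points `x < y < z` of a
strictly convex function are impossible: both secant slopes over `[x, y]` and `[y, z]` would be `1`.
-/

open Finset Set Filter Topology Function

theorem StrictConvexOn.eq_of_isFixedPt {s : Set ℝ} {f : ℝ → ℝ} (hf : StrictConvexOn ℝ s f)
    {x y z : ℝ} (hx : x ∈ s) (hy : y ∈ s) (hz : z ∈ s) (hxz : x < z) (hyz : y < z)
    (hfx : IsFixedPt f x) (hfy : IsFixedPt f y) (hfz : IsFixedPt f z) : x = y := by
  have three_fixedPts_false :
      ∀ {a b}, a ∈ s → a < b → b < z → IsFixedPt f a → IsFixedPt f b → False := by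
    intro a b ha hab hbz hfa hfb
    have hslopes := hf.slope_strict_mono_adjacent ha hz hab hbz
    rw [hfa.eq, hfb.eq, hfz.eq, div_self (sub_pos.2 hab).ne', div_self (sub_pos.2 hbz).ne']
      at hslopes
    exact hslopes.false
  rcases lt_trichotomy x y with hxy | hxy | hxy
  · exact (three_fixedPts_false hx hxy hyz hfx hfy).elim
  · exact hxy
  · exact (three_fixedPts_false hy hxy hxz hfy hfx).elim

theorem HasDerivAt.exists_lt_self_of_one_lt {f : ℝ → ℝ} {f' a b : ℝ} (hf : HasDerivAt f f' a)
    (ha : f a = a) (hf' : 1 < f') (hb : b < a) : ∃ x ∈ Ioo b a, f x < x := by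
  have hslope : ∀ᶠ x in 𝓝[<] a, 1 < slope f a x :=
    (hf.tendsto_slope.mono_left (nhdsLT_le_nhdsNE a)).eventually (eventually_gt_nhds hf')
  obtain ⟨x, hx1, hx⟩ := (hslope.and (Ioo_mem_nhdsLT hb)).exists
  refine ⟨x, hx, ?_⟩
  rw [slope_def_field, ha, lt_div_iff_of_neg (sub_neg.2 hx.2)] at hx1
  linarith

theorem Finset.one_lt_card_of_one_lt_sum {ι : Type*} {J : Finset ι} {c : ι → ℝ}
    (hc : ∀ j ∈ J, c j ≤ 1) (hsum : 1 < ∑ j ∈ J, c j) : 1 < #J := by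
  by_contra! hJ
  have hcard : (#J : ℝ) ≤ 1 := by exact_mod_cast hJ
  have hle := J.sum_le_card_nsmul c 1 hc
  rw [nsmul_eq_mul, mul_one] at hle
  linarith

def affineProd {ι : Type*} (J : Finset ι) (c : ι → ℝ) (x : ℝ) : ℝ :=
  ∏ j ∈ J, ((1 - c j) + c j * x)

namespace affineProd

variable {ι : Type*} (J : Finset ι) (c : ι → ℝ)

theorem apply_one : affineProd J c 1 = 1 :=
  prod_eq_one fun j _ => by ring

theorem apply_zero_pos (hc : ∀ j ∈ J, c j < 1) : 0 < affineProd J c 0 :=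
  prod_pos fun j hj => by linarith [hc j hj]

theorem continuous : Continuous (affineProd J c) := by
  unfold affineProd
  fun_prop

theorem hasDerivAt [DecidableEq ι] (x : ℝ) :
    HasDerivAt (affineProd J c) (∑ j ∈ J, (∏ k ∈ J.erase j, ((1 - c k) + c k * x)) * c j) x := by
  refine (HasDerivAt.fun_finsetProd (u := J) (x := x)
    fun j _ => ((hasDerivAt_id x).const_mul (c j)).const_add (1 - c j)).congr_deriv ?_
  simp

theorem hasDerivAt_one : HasDerivAt (affineProd J c) (∑ j ∈ J, c j) 1 := by
  classical
  simpa using hasDerivAt J c 1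

theorem strictMonoOn_deriv (hc : ∀ j ∈ J, c j ∈ Set.Ioc 0 1) (hJ : 1 < #J) :
    StrictMonoOn (deriv (affineProd J c)) (Ioi 0) := by
  classical
  intro x hx y hy hxy
  simp only [(hasDerivAt J c _).deriv]
  refine sum_lt_sum_of_nonempty (card_pos.1 (zero_lt_one.trans hJ)) fun j hj => ?_
  refine mul_lt_mul_of_pos_right (prod_lt_prod_of_nonempty (fun k hk => ?_) (fun k hk => ?_) ?_)
    (hc j hj).1
  · obtain ⟨hck0, hck1⟩ := hc k (mem_of_mem_erase hk)
    nlinarith [mem_Ioi.1 hx]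
  · nlinarith [(hc k (mem_of_mem_erase hk)).1]
  · rw [← card_pos, card_erase_of_mem hj]
    omega

theorem strictConvexOn (hc : ∀ j ∈ J, c j ∈ Set.Ioc 0 1) (hJ : 1 < #J) :
    StrictConvexOn ℝ (Ici 0) (affineProd J c) :=
  (interior_Ici (a := (0 : ℝ)) ▸ strictMonoOn_deriv J c hc hJ).strictConvexOn_of_deriv
    (convex_Ici 0) (continuous J c).continuousOn

end affineProd

theorem unique_fixed_point_in_Ioo_general {ι : Type*} (J : Finset ι)
    (c : ι → ℝ) (hc : ∀ j ∈ J, c j ∈ Set.Ioo (0 : ℝ) 1)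
    (hsum : 1 < ∑ j ∈ J, c j) :
    ∃! x : ℝ, x ∈ Set.Ioo (0 : ℝ) 1 ∧ x = ∏ j ∈ J, ((1 - c j) + c j * x) := by
  have hconv := affineProd.strictConvexOn J c (fun j hj => Ioo_subset_Ioc_self (hc j hj))
    (one_lt_card_of_one_lt_sum (fun j hj => (hc j hj).2.le) hsum)
  have hf0 := affineProd.apply_zero_pos J c fun j hj => (hc j hj).2
  obtain ⟨x₁, hx₁, hfx₁⟩ := (affineProd.hasDerivAt_one J c).exists_lt_self_of_one_lt
    (affineProd.apply_one J c) hsum zero_lt_one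
  obtain ⟨x, hx, hfx⟩ := exists_mem_Icc_isFixedPt (affineProd.continuous J c).continuousOn
    hx₁.1.le hf0.le hfx₁.le
  have hx0 : 0 < x := hx.1.lt_of_ne <| by
    rintro rfl
    exact hf0.ne' hfx
  refine ⟨x, ⟨⟨hx0, hx.2.trans_lt hx₁.2⟩, hfx.symm⟩, fun y ⟨hy, hfy⟩ => ?_⟩
  exact hconv.eq_of_isFixedPt hy.1.le hx0.le (mem_Ici.2 zero_le_one) hy.2 (hx.2.trans_lt hx₁.2)
    hfy.symm hfx (affineProd.apply_one J c)

/-- For a nonempty finite index set `J` with `c j ∈ (0,1)` for all `j ∈ J` and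
`∑ j ∈ J, c j > 1`, the equation `x = ∏ j ∈ J, ((1 - c j) + c j * x)` has exactly
one solution in the open interval `(0,1)`. -/
theorem unique_fixed_point_in_Ioo {ι : Type*} (J : Finset ι) (hJ : J.Nonempty)
    (c : ι → ℝ) (hc : ∀ j ∈ J, c j ∈ Set.Ioo (0 : ℝ) 1)
    (hsum : 1 < ∑ j ∈ J, c j) :
    ∃! x : ℝ, x ∈ Set.Ioo (0 : ℝ) 1 ∧ x = ∏ j ∈ J, ((1 - c j) + c j * x) :=
  unique_fixed_point_in_Ioo_general J c hc hsum
end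

section
/- Let r_1, r_2 ∈ (0,1) with r_1 + r_2 > 1. Then the unique pair (ξ_1, ξ_2) ∈ (0,1) × (0,1) satisfying ξ_1 = (1 - r_1) + r_1 ξ_1 ξ_2 and ξ_2 = (1 - r_2) + r_2 ξ_1 ξ_2 is given by ξ_1 = (1 - r_1)/r_2 and ξ_2 = (1 - r_2)/r_1, and in this case ξ_1 ξ_2 = (1 - r_1)(1 - r_2)/(r_1 r_2). -/
/-! Substituting both equations into `p = ξ₁ ξ₂` gives a quadratic in `p` with roots `1` and
`(1 - r₁)(1 - r₂)/(r₁ r₂)`. On `(0,1)²` the product is below `1`, so it is the second root, and each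
equation then determines its `ξᵢ` linearly; `(1 - r₁)/r₂ < 1` is equivalent to `r₁ + r₂ > 1`. -/

section Field

variable {K : Type*} [Field K]

theorem one_sub_add_mul_sibling_product {r₁ r₂ : K} (hr₁ : r₁ ≠ 0) (hr₂ : r₂ ≠ 0) :
    (1 - r₁) / r₂ = (1 - r₁) + r₁ * ((1 - r₁) / r₂ * ((1 - r₂) / r₁)) := by
  field_simp
  ring

theorem sibling_product_quadratic {r₁ r₂ ξ₁ ξ₂ : K}
    (hξ₁ : ξ₁ = (1 - r₁) + r₁ * (ξ₁ * ξ₂)) (hξ₂ : ξ₂ = (1 - r₂) + r₂ * (ξ₁ * ξ₂)) :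
    (ξ₁ * ξ₂ - 1) * (r₁ * r₂ * (ξ₁ * ξ₂) - (1 - r₁) * (1 - r₂)) = 0 := by
  linear_combination -(1 - r₂ + r₂ * (ξ₁ * ξ₂)) * hξ₁ - ξ₁ * hξ₂

theorem eq_sibling_solution_of_product_ne_one {r₁ r₂ ξ₁ ξ₂ : K} (hr₁ : r₁ ≠ 0) (hr₂ : r₂ ≠ 0)
    (hξ₁ : ξ₁ = (1 - r₁) + r₁ * (ξ₁ * ξ₂)) (hξ₂ : ξ₂ = (1 - r₂) + r₂ * (ξ₁ * ξ₂))
    (hp : ξ₁ * ξ₂ ≠ 1) :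
    ξ₁ = (1 - r₁) / r₂ ∧ ξ₂ = (1 - r₂) / r₁ := by
  have hroot : r₁ * r₂ * (ξ₁ * ξ₂) - (1 - r₁) * (1 - r₂) = 0 :=
    (mul_eq_zero.1 (sibling_product_quadratic hξ₁ hξ₂)).resolve_left (sub_ne_zero.2 hp)
  have hprod : ξ₁ * ξ₂ = (1 - r₁) / r₂ * ((1 - r₂) / r₁) := by
    field_simp
    linear_combination hroot
  constructor
  · rw [hξ₁, hprod, ← one_sub_add_mul_sibling_product hr₁ hr₂]
  · rw [hξ₂, hprod, mul_comm ((1 - r₁) / r₂), ← one_sub_add_mul_sibling_product hr₂ hr₁]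

end Field

theorem one_sub_div_mem_Ioo {r₁ r₂ : ℝ} (hr₁ : r₁ < 1) (hr₂ : 0 < r₂) (hsum : 1 < r₁ + r₂) :
    (1 - r₁) / r₂ ∈ Set.Ioo (0 : ℝ) 1 :=
  ⟨div_pos (sub_pos.2 hr₁) hr₂, (div_lt_one hr₂).2 (by linarith)⟩

/-- For `r₁, r₂ ∈ (0,1)` with `r₁ + r₂ > 1`, the unique pair `(ξ₁, ξ₂) ∈ (0,1)²`
satisfying `ξ₁ = (1 - r₁) + r₁ ξ₁ ξ₂` and `ξ₂ = (1 - r₂) + r₂ ξ₁ ξ₂` is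
`ξ₁ = (1 - r₁)/r₂`, `ξ₂ = (1 - r₂)/r₁`, and then `ξ₁ ξ₂ = (1 - r₁)(1 - r₂)/(r₁ r₂)`. -/
theorem two_sibling_system_solution (r₁ r₂ : ℝ)
    (h1 : r₁ ∈ Set.Ioo (0 : ℝ) 1) (h2 : r₂ ∈ Set.Ioo (0 : ℝ) 1) (hsum : 1 < r₁ + r₂) :
    ((1 - r₁) / r₂ ∈ Set.Ioo (0 : ℝ) 1) ∧
    ((1 - r₂) / r₁ ∈ Set.Ioo (0 : ℝ) 1) ∧
    ((1 - r₁) / r₂ = (1 - r₁) + r₁ * ((1 - r₁) / r₂ * ((1 - r₂) / r₁))) ∧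
    ((1 - r₂) / r₁ = (1 - r₂) + r₂ * ((1 - r₁) / r₂ * ((1 - r₂) / r₁))) ∧
    (∀ ξ₁ ξ₂ : ℝ, ξ₁ ∈ Set.Ioo (0 : ℝ) 1 → ξ₂ ∈ Set.Ioo (0 : ℝ) 1 →
      ξ₁ = (1 - r₁) + r₁ * (ξ₁ * ξ₂) → ξ₂ = (1 - r₂) + r₂ * (ξ₁ * ξ₂) →
      ξ₁ = (1 - r₁) / r₂ ∧ ξ₂ = (1 - r₂) / r₁) ∧
    ((1 - r₁) / r₂ * ((1 - r₂) / r₁) = (1 - r₁) * (1 - r₂) / (r₁ * r₂)) := by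
  obtain ⟨hr₁, hr₁_lt⟩ := h1
  obtain ⟨hr₂, hr₂_lt⟩ := h2
  refine ⟨one_sub_div_mem_Ioo hr₁_lt hr₂ hsum, one_sub_div_mem_Ioo hr₂_lt hr₁ (by linarith),
    one_sub_add_mul_sibling_product hr₁.ne' hr₂.ne', ?_, ?_, ?_⟩
  · rw [mul_comm ((1 - r₁) / r₂)]
    exact one_sub_add_mul_sibling_product hr₂.ne' hr₁.ne'
  · intro ξ₁ ξ₂ hξ₁ hξ₂ h₁ h₂
    have hp : ξ₁ * ξ₂ < 1 := mul_lt_one_of_nonneg_of_lt_one_left hξ₁.1.le hξ₁.2 hξ₂.2.le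
    exact eq_sibling_solution_of_product_ne_one hr₁.ne' hr₂.ne' h₁ h₂ hp.ne
  · rw [div_mul_div_comm, mul_comm r₂]
end
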